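/- If b_i is a vertex of the convex hull of {b_j : j ∈ Ω} (i.e., b_i is not in the convex hull of the remaining points), then for every c : Ω → ℝ there exists a ∈ ℝ^d with b_i·a + c_i > b_j·a + c_j for all j ∈ Ω, j ≠ i (strict top-1 reachability under affine score updates with unconstrained real-valued actions). -/

import Mathlib

/-!
Since the remaining points span a compact convex set not containing `b i`, Hahn–Banach gives a
linear functional `f` with `f (b j) < f (b i)` for all `j ≠ i`. Along the action `t • f`, the
score gap of `i` over `j` grows like `t * (f (b i) - f (b j))`, so for `t` large it beats the
finitely many offsets `c j - c i`.
-/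

open Filter Matrix

theorem LinearEquiv.dotProduct_piRing {ι R : Type*} [CommSemiring R] [Fintype ι] [DecidableEq ι]
    (f : (ι → R) →ₗ[R] R) (x : ι → R) : x ⬝ᵥ LinearEquiv.piRing R R ι R f = f x := by
  calc x ⬝ᵥ LinearEquiv.piRing R R ι R f
      = (LinearEquiv.piRing R R ι R).symm (LinearEquiv.piRing R R ι R f) x :=
        (LinearEquiv.piRing_symm_apply R _ x).symm
    _ = f x := by rw [LinearEquiv.symm_apply_apply]

theorem exists_strongDual_lt_of_notMem_convexHull {E : Type*} [AddCommGroup E] [Module ℝ E]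
    [TopologicalSpace E] [T2Space E] [IsTopologicalAddGroup E] [ContinuousSMul ℝ E]
    [LocallyConvexSpace ℝ E] {s : Set E} (hs : s.Finite) {x : E} (hx : x ∉ convexHull ℝ s) :
    ∃ f : StrongDual ℝ E, ∀ y ∈ s, f y < f x := by
  obtain ⟨f, u, hlt, hgt⟩ := geometric_hahn_banach_closed_point (convex_convexHull ℝ s)
    (hs.isCompact_convexHull ℝ).isClosed hx
  exact ⟨f, fun y hy => (hlt y (subset_convexHull ℝ s hy)).trans hgt⟩

theorem eventually_forall_mul_add_lt {Ω : Type*} [Finite Ω] {g : Ω → ℝ} {i : Ω}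
    (hg : ∀ j, j ≠ i → g j < g i) (c : Ω → ℝ) :
    ∀ᶠ t in atTop, ∀ j, j ≠ i → t * g j + c j < t * g i + c i := by
  refine eventually_all.2 fun j => ?_
  by_cases hj : j = i
  · exact .of_forall fun _ hne => absurd hj hne
  have hgap : Tendsto (fun t => t * (g i - g j)) atTop atTop :=
    tendsto_id.atTop_mul_const (sub_pos.2 (hg j hj))
  filter_upwards [hgap.eventually_gt_atTop (c j - c i)] with t ht _
  linarith

/-- If `b i` is a vertex of the convex hull of the `b j`, then for every `c` there is an
unconstrained real-valued action `a` making item `i` strictly top-1 under affine scores. -/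
theorem vertex_implies_strict_top1_reachable {Ω : Type*} [Fintype Ω] {d : ℕ}
    (b : Ω → (Fin d → ℝ)) (i : Ω)
    (h : b i ∉ convexHull ℝ {x : Fin d → ℝ | ∃ j : Ω, j ≠ i ∧ b j = x}) :
    ∀ c : Ω → ℝ, ∃ a : Fin d → ℝ, ∀ j : Ω, j ≠ i →
      (∑ k, b j k * a k) + c j < (∑ k, b i k * a k) + c i := by
  intro c
  have hfin : {x : Fin d → ℝ | ∃ j : Ω, j ≠ i ∧ b j = x}.Finite :=
    (Set.finite_range b).subset fun _ ⟨j, _, hj⟩ => ⟨j, hj⟩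
  obtain ⟨f, hf⟩ := exists_strongDual_lt_of_notMem_convexHull hfin h
  obtain ⟨t, ht⟩ := (eventually_forall_mul_add_lt (g := fun j => f (b j))
    (fun j hj => hf _ ⟨j, hj, rfl⟩) c).exists
  refine ⟨t • LinearEquiv.piRing ℝ ℝ (Fin d) ℝ (f : (Fin d → ℝ) →ₗ[ℝ] ℝ), fun j hj => ?_⟩
  change b j ⬝ᵥ _ + c j < b i ⬝ᵥ _ + c i
  simpa only [dotProduct_smul, LinearEquiv.dotProduct_piRing, ContinuousLinearMap.coe_coe,
    smul_eq_mul] using ht j hj
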